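/- Theorem (size-18 counterexample): Let G be the 3DSM graph containing the size-3 counterexample graph H (vertices 0..8 with edges as specified), with disjoint single gadgets H_0, H_2, H_7 (Key Lemma, distinguished vertices 0, 2, 7, r'_x=ρ_H(x)+1) and disjoint double gadgets H_{1,4}, H_{3,6}, H_{5,8} (Lemma 2, with x-vertices 1,3,5 and z-vertices 4,6,8, r'_s=ρ_H(s)+1), all pairwise disjoint and meeting H only in the indicated vertices, with V(G) equal to the union of these gadget vertex sets and remaining ranks arbitrary. Then the 3DSM problem on G has no stable matching. -/
import Mathlib


/-- Rank function of the size-3 3DSMI counterexample graph `H` on vertices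
`0,…,8` (gender of `v` is `v mod 3`); `rk a b = 0` means no edge. -/
def rk : Fin 9 → Fin 9 → ℕ := fun a b =>
  if (a.val, b.val) ∈ [(0,1),(1,2),(2,3),(3,4),(4,5),(5,0),(6,4),(7,8),(8,0)] then 1
  else if (a.val, b.val) ∈ [(4,8),(8,6),(0,7),(1,5),(5,3),(3,1)] then 2
  else if (a.val, b.val) = (4,2) then 3
  else 0

/-- `ρ_H(v)`: the maximal rank of an `H`-edge out of `v`. -/
def ρ : Fin 9 → ℕ := ![2, 2, 1, 2, 3, 2, 1, 1, 2]

/-- Vertex set of the size-18 counterexample: the 9 vertices of `H`, the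
7 new vertices of each of the three single (Key-Lemma) gadgets, and the
8 new vertices of each of the three double (Lemma 2) gadgets. -/
abbrev W := Fin 9 ⊕ (Fin 3 × Fin 7) ⊕ (Fin 3 × Fin 8)

/-- A vertex of `H` inside `W`. -/
def hv (a : Fin 9) : W := .inl a

/-- Vertex `j` of single gadget `i`; coordinates `0,…,6` = `a,b,c,d,e,s,t`. -/
def sg (i : Fin 3) (j : Fin 7) : W := .inr (.inl (i, j))

/-- Vertex `j` of double gadget `i`; coordinates `0,…,7` = `a,b,c,d,e,f,s,t`. -/
def dg (i : Fin 3) (j : Fin 8) : W := .inr (.inr (i, j))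

/-- Attachment vertices of the single gadgets: `0`, `2`, `7`. -/
def sv : Fin 3 → Fin 9 := ![0, 2, 7]

/-- `x`-attachment vertices of the double gadgets: `1`, `3`, `5`. -/
def xv : Fin 3 → Fin 9 := ![1, 3, 5]

/-- `z`-attachment vertices of the double gadgets: `4`, `6`, `8`. -/
def zv : Fin 3 → Fin 9 := ![4, 6, 8]

/-- The ranked edges of single (Key-Lemma) gadget `i`, attached at the
`H`-vertex `sv i`, with `r'ˣ = ρ_H(sv i) + 1`. -/
def singleSpec (i : Fin 3) : List (W × W × ℕ) :=
  let x := hv (sv i)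
  let a := sg i 0; let b := sg i 1; let c := sg i 2; let d := sg i 3
  let e := sg i 4; let s := sg i 5; let t := sg i 6
  let r' := ρ (sv i) + 1
  [(e,c,1), (c,a,1), (d,a,1), (a,x,1), (b,x,1), (t,e,1), (s,d,1),
   (t,s,2), (e,d,2), (c,b,2), (d,b,2), (a,e,2), (b,e,2),
   (b,s,3), (d,t,3), (x,c,r'), (x,d,r'+1)]

/-- The ranked edges of double (Lemma 2) gadget `i`, attached at the
`H`-vertices `xv i` (as `x`) and `zv i` (as `z`), with
`r'ˣ = ρ_H(xv i) + 1` and `r'ᶻ = ρ_H(zv i) + 1`. -/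
def doubleSpec (i : Fin 3) : List (W × W × ℕ) :=
  let x := hv (xv i); let z := hv (zv i)
  let a := dg i 0; let b := dg i 1; let c := dg i 2; let d := dg i 3
  let e := dg i 4; let f := dg i 5; let s := dg i 6; let t := dg i 7
  let r'x := ρ (xv i) + 1
  let r'z := ρ (zv i) + 1
  [(e,c,1), (c,a,1), (d,a,1), (a,x,1), (b,x,1), (t,e,1), (s,d,1), (f,e,1),
   (t,s,2), (e,d,2), (c,b,2), (d,b,2), (a,z,2), (b,z,2),
   (c,f,3), (a,e,4), (b,e,3), (d,t,3), (b,s,4),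
   (x,c,r'x), (x,d,r'x+1), (z,c,r'z), (z,d,r'z+1)]

section Gadgets

variable {E : W → W → Prop} {r : W → W → ℕ} {m : W → W}

/-- If `w` is a known out-neighbour of `v` and `m v ≠ w`, then the rank of
`v`'s partner differs from that of `w`. -/
lemma rank_ne (hinj : ∀ v, Set.InjOn (r v) {w | E v w}) (hmE : ∀ v, E v (m v))
    {v w : W} (hEw : E v w) (hne : m v ≠ w) : r v (m v) ≠ r v w :=
  fun h => hne (hinj v (hmE v) hEw h)

/-- Key-Lemma (single) gadget: the distinguished vertex `x` cannot be matched
worse than `ρx` while being the partner of some vertex `u` outside the gadget. -/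
lemma singleKey
    (hpos : ∀ v w, E v w → 1 ≤ r v w)
    (hinj : ∀ v, Set.InjOn (r v) {w | E v w})
    (hmE : ∀ v, E v (m v)) (hm3 : ∀ v, m (m (m v)) = v)
    (hstab : ∀ u v w, E u v → E v w → E w u →
      r u v < r u (m u) → r v w < r v (m v) → r w u < r w (m w) → False)
    (x a b c d e s t u : W) (ρx : ℕ)
    (hab : a ≠ b) (hcd : c ≠ d) (hat : a ≠ t) (hbt : b ≠ t)
    (hua : u ≠ a) (hub : u ≠ b) (hut : u ≠ t) (hxe : x ≠ e) (hxs : x ≠ s)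
    (hEec : E e c) (hrec : r e c = 1)
    (hEca : E c a) (hrca : r c a = 1)
    (hEda : E d a) (hrda : r d a = 1)
    (hEax : E a x) (hrax : r a x = 1)
    (hEbx : E b x) (hrbx : r b x = 1)
    (hEte : E t e) (hrte : r t e = 1)
    (hEsd : E s d) (hrsd : r s d = 1)
    (hEts : E t s) (hrts : r t s = 2)
    (hEed : E e d) (hred : r e d = 2)
    (hEcb : E c b) (hrcb : r c b = 2)
    (hEdb : E d b) (hrdb : r d b = 2)
    (hEae : E a e) (hrae : r a e = 2)
    (hEbe : E b e) (hrbe : r b e = 2)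
    (hEbs : E b s) (hrbs : r b s = 3)
    (hEdt : E d t) (hrdt : r d t = 3)
    (hExc : E x c) (hrxc : r x c = ρx + 1)
    (hExd : E x d) (hrxd : r x d = ρx + 2)
    (hmu : m u = x) (hgt : ρx < r x (m x)) : False := by
  have minj : Function.Injective m := fun p q h => by
    have h2 := congrArg m (congrArg m h); rwa [hm3, hm3] at h2
  have hmax : m a ≠ x := fun h => hua (minj (hmu.trans h.symm))
  have hmbx : m b ≠ x := fun h => hub (minj (hmu.trans h.symm))
  have pax : r a x < r a (m a) := by
    have h1 := hpos a (m a) (hmE a)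
    have h2 := rank_ne hinj hmE hEax hmax
    omega
  by_cases hc : m x = c
  · -- Case (ii): x is matched to c
    have h1 := hm3 x; rw [hc] at h1
    have hmcu : m c = u := minj (h1.trans hmu.symm)
    have hmca : m c ≠ a := fun h => hua (hmcu.symm.trans h)
    have hmcb : m c ≠ b := fun h => hub (hmcu.symm.trans h)
    have pc : 2 < r c (m c) := by
      have h1 := hpos c (m c) (hmE c)
      have h2 := rank_ne hinj hmE hEca hmca
      have h3 := rank_ne hinj hmE hEcb hmcb
      omega
    have hmec : m e ≠ c := fun h => hxe (minj (hc.trans h.symm))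
    have pec : r e c < r e (m e) := by
      have h1 := hpos e (m e) (hmE e)
      have h2 := rank_ne hinj hmE hEec hmec
      omega
    -- triangle (e, c, a) forces m a = e
    have hmae : m a = e := by
      by_contra hne
      have pa : r a e < r a (m a) := by
        have h1 := hpos a (m a) (hmE a)
        have h2 := rank_ne hinj hmE hEax hmax
        have h3 := rank_ne hinj hmE hEae hne
        omega
      exact hstab e c a hEec hEca hEae pec (by omega) pa
    -- triangle (e, c, b) blocks
    have hmbe : m b ≠ e := fun h => hab (minj (hmae.trans h.symm))
    have pb : r b e < r b (m b) := by
      have h1 := hpos b (m b) (hmE b)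
      have h2 := rank_ne hinj hmE hEbx hmbx
      have h3 := rank_ne hinj hmE hEbe hmbe
      omega
    exact hstab e c b hEec hEcb hEbe pec (by omega) pb
  by_cases hd : m x = d
  · -- Case (iii): x is matched to d
    have h1 := hm3 x; rw [hd] at h1
    have hmdu : m d = u := minj (h1.trans hmu.symm)
    have hmda : m d ≠ a := fun h => hua (hmdu.symm.trans h)
    have hmdb : m d ≠ b := fun h => hub (hmdu.symm.trans h)
    have hmdt : m d ≠ t := fun h => hut (hmdu.symm.trans h)
    have pd : 3 < r d (m d) := by
      have h1 := hpos d (m d) (hmE d)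
      have h2 := rank_ne hinj hmE hEda hmda
      have h3 := rank_ne hinj hmE hEdb hmdb
      have h4 := rank_ne hinj hmE hEdt hmdt
      omega
    have pxc : r x c < r x (m x) := by rw [hd, hrxd, hrxc]; omega
    -- triangle (c, a, x) forces m c = a
    have hmca : m c = a := by
      by_contra hne
      have pca : r c a < r c (m c) := by
        have h1 := hpos c (m c) (hmE c)
        have h2 := rank_ne hinj hmE hEca hne
        omega
      exact hstab c a x hEca hEax hExc pca pax pxc
    have hmsd : m s ≠ d := fun h => hxs (minj (hd.trans h.symm))
    have psd : r s d < r s (m s) := by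
      have h1 := hpos s (m s) (hmE s)
      have h2 := rank_ne hinj hmE hEsd hmsd
      omega
    -- triangle (d, b, s): m b ∈ {e, s}
    have hmb : m b = e ∨ m b = s := by
      by_contra hne
      push_neg at hne
      have pbs : r b s < r b (m b) := by
        have h1 := hpos b (m b) (hmE b)
        have h2 := rank_ne hinj hmE hEbx hmbx
        have h3 := rank_ne hinj hmE hEbe hne.1
        have h4 := rank_ne hinj hmE hEbs hne.2
        omega
      exact hstab d b s hEdb hEbs hEsd (by omega) pbs psd
    -- triangle (d, t, s): m t ∈ {e, s}
    have hmt : m t = e ∨ m t = s := by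
      by_contra hne
      push_neg at hne
      have pts : r t s < r t (m t) := by
        have h1 := hpos t (m t) (hmE t)
        have h2 := rank_ne hinj hmE hEte hne.1
        have h3 := rank_ne hinj hmE hEts hne.2
        omega
      exact hstab d t s hEdt hEts hEsd (by omega) pts psd
    rcases hmb with hmb | hmb
    · -- m b = e, so m t = s
      have hmts : m t = s :=
        hmt.resolve_left (fun h => hbt (minj (hmb.trans h.symm)))
      have pte : r t e < r t (m t) := by rw [hmts, hrts, hrte]; omega
      -- triangle (d, t, e): m e ∈ {c, d}
      have hme : m e = c ∨ m e = d := by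
        by_contra hne
        push_neg at hne
        have ped : r e d < r e (m e) := by
          have h1 := hpos e (m e) (hmE e)
          have h2 := rank_ne hinj hmE hEec hne.1
          have h3 := rank_ne hinj hmE hEed hne.2
          omega
        exact hstab d t e hEdt hEte hEed (by omega) pte ped
      rcases hme with hme | hme
      · have h2 := hm3 e; rw [hme, hmca] at h2
        exact hab (minj (h2.trans hmb.symm))
      · exact hxe (minj (hd.trans hme.symm))
    · -- m b = s, so m t = e
      have hmte : m t = e :=
        hmt.resolve_right (fun h => hbt (minj (hmb.trans h.symm)))
      have hmec : m e ≠ c := fun h => by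
        have h2 := hm3 e; rw [h, hmca] at h2
        exact hat (minj (h2.trans hmte.symm))
      have hmed : m e ≠ d := fun h => hxe (minj (hd.trans h.symm))
      have ped : r e d < r e (m e) := by
        have h1 := hpos e (m e) (hmE e)
        have h2 := rank_ne hinj hmE hEec hmec
        have h3 := rank_ne hinj hmE hEed hmed
        omega
      have hmae : m a ≠ e := fun h => hat (minj (h.trans hmte.symm))
      have pae : r a e < r a (m a) := by
        have h1 := hpos a (m a) (hmE a)
        have h2 := rank_ne hinj hmE hEax hmax
        have h3 := rank_ne hinj hmE hEae hmae
        omega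
      exact hstab d a e hEda hEae hEed (by omega) pae ped
  · -- Case (i): x is matched worse than ρx + 2
    have hgt2 : ρx + 2 < r x (m x) := by
      have h2 := rank_ne hinj hmE hExc hc
      have h3 := rank_ne hinj hmE hExd hd
      omega
    have hmca : m c = a := by
      by_contra hne
      have pca : r c a < r c (m c) := by
        have h1 := hpos c (m c) (hmE c)
        have h2 := rank_ne hinj hmE hEca hne
        omega
      exact hstab c a x hEca hEax hExc pca pax (by omega)
    have hmda : m d = a := by
      by_contra hne
      have pda : r d a < r d (m d) := by
        have h1 := hpos d (m d) (hmE d)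
        have h2 := rank_ne hinj hmE hEda hne
        omega
      exact hstab d a x hEda hEax hExd pda pax (by omega)
    exact hcd (minj (hmca.trans hmda.symm))

/-- Lemma-2 (double) gadget, `x`-role: if the attachment vertex `x` is matched
worse than `ρx` while being the partner of an outside vertex `u`, then `b` is
matched to `z` and `z` is matched within rank `ρz`. -/
lemma doubleX
    (hpos : ∀ v w, E v w → 1 ≤ r v w)
    (hinj : ∀ v, Set.InjOn (r v) {w | E v w})
    (hmE : ∀ v, E v (m v)) (hm3 : ∀ v, m (m (m v)) = v)
    (hstab : ∀ u v w, E u v → E v w → E w u →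
      r u v < r u (m u) → r v w < r v (m v) → r w u < r w (m w) → False)
    (x z a b c d e f s t u : W) (ρx ρz : ℕ)
    (hab : a ≠ b) (hcd : c ≠ d) (hat : a ≠ t) (hbt : b ≠ t) (hbf : b ≠ f)
    (hua : u ≠ a) (hub : u ≠ b) (hut : u ≠ t) (huf : u ≠ f)
    (hxe : x ≠ e) (hxs : x ≠ s)
    (hEec : E e c) (hrec : r e c = 1)
    (hEca : E c a) (hrca : r c a = 1)
    (hEda : E d a) (hrda : r d a = 1)
    (hEax : E a x) (hrax : r a x = 1)
    (hEbx : E b x) (hrbx : r b x = 1)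
    (hEte : E t e) (hrte : r t e = 1)
    (hEsd : E s d) (hrsd : r s d = 1)
    (hEfe : E f e) (hrfe : r f e = 1)
    (hEts : E t s) (hrts : r t s = 2)
    (hEed : E e d) (hred : r e d = 2)
    (hEcb : E c b) (hrcb : r c b = 2)
    (hEdb : E d b) (hrdb : r d b = 2)
    (hEaz : E a z) (hraz : r a z = 2)
    (hEbz : E b z) (hrbz : r b z = 2)
    (hEcf : E c f) (hrcf : r c f = 3)
    (hEae : E a e) (hrae : r a e = 4)
    (hEbe : E b e) (hrbe : r b e = 3)
    (hEdt : E d t) (hrdt : r d t = 3)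
    (hEbs : E b s) (hrbs : r b s = 4)
    (hExc : E x c) (hrxc : r x c = ρx + 1)
    (hExd : E x d) (hrxd : r x d = ρx + 2)
    (hEzc : E z c) (hrzc : r z c = ρz + 1)
    (hEzd : E z d) (hrzd : r z d = ρz + 2)
    (hmu : m u = x) (hgt : ρx < r x (m x)) :
    m b = z ∧ r z (m z) ≤ ρz := by
  have minj : Function.Injective m := fun p q h => by
    have h2 := congrArg m (congrArg m h); rwa [hm3, hm3] at h2
  have hmax : m a ≠ x := fun h => hua (minj (hmu.trans h.symm))
  have hmbx : m b ≠ x := fun h => hub (minj (hmu.trans h.symm))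
  have pax : r a x < r a (m a) := by
    have h1 := hpos a (m a) (hmE a)
    have h2 := rank_ne hinj hmE hEax hmax
    omega
  by_cases hc : m x = c
  · -- Case (ii): x is matched to c
    have h1 := hm3 x; rw [hc] at h1
    have hmcu : m c = u := minj (h1.trans hmu.symm)
    have pc : 3 < r c (m c) := by
      have h1 := hpos c (m c) (hmE c)
      have h2 := rank_ne hinj hmE hEca (fun h => hua (hmcu.symm.trans h))
      have h3 := rank_ne hinj hmE hEcb (fun h => hub (hmcu.symm.trans h))
      have h4 := rank_ne hinj hmE hEcf (fun h => huf (hmcu.symm.trans h))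
      omega
    have hmec : m e ≠ c := fun h => hxe (minj (hc.trans h.symm))
    have pec : r e c < r e (m e) := by
      have h1 := hpos e (m e) (hmE e)
      have h2 := rank_ne hinj hmE hEec hmec
      omega
    have hmfe : m f = e := by
      by_contra hne
      have pfe : r f e < r f (m f) := by
        have h1 := hpos f (m f) (hmE f)
        have h2 := rank_ne hinj hmE hEfe hne
        omega
      exact hstab f e c hEfe hEec hEcf pfe pec (by omega)
    have hmbz : m b = z := by
      by_contra hne
      have pbe : r b e < r b (m b) := by
        have h1 := hpos b (m b) (hmE b)
        have h2 := rank_ne hinj hmE hEbx hmbx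
        have h3 := rank_ne hinj hmE hEbz hne
        have h4 := rank_ne hinj hmE hEbe (fun h => hbf (minj (h.trans hmfe.symm)))
        omega
      exact hstab e c b hEec hEcb hEbe pec (by omega) pbe
    have h3 := hm3 b; rw [hmbz] at h3
    have paz : r a z < r a (m a) := by
      have h1 := hpos a (m a) (hmE a)
      have h2 := rank_ne hinj hmE hEax hmax
      have h4 := rank_ne hinj hmE hEaz (fun h => hab (minj (h.trans hmbz.symm)))
      omega
    have hnzc : ¬ (r z c < r z (m z)) := fun hp =>
      hstab c a z hEca hEaz hEzc (by omega) paz hp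
    have hmzc : m z ≠ c := fun h => hub (hmcu.symm.trans (by rw [h] at h3; exact h3))
    have h5 := rank_ne hinj hmE hEzc hmzc
    exact ⟨hmbz, by omega⟩
  by_cases hd : m x = d
  · -- Case (iii): x is matched to d
    have h1 := hm3 x; rw [hd] at h1
    have hmdu : m d = u := minj (h1.trans hmu.symm)
    have pd : 3 < r d (m d) := by
      have h1 := hpos d (m d) (hmE d)
      have h2 := rank_ne hinj hmE hEda (fun h => hua (hmdu.symm.trans h))
      have h3 := rank_ne hinj hmE hEdb (fun h => hub (hmdu.symm.trans h))
      have h4 := rank_ne hinj hmE hEdt (fun h => hut (hmdu.symm.trans h))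
      omega
    have pxc : r x c < r x (m x) := by rw [hd, hrxd, hrxc]; omega
    have hmca : m c = a := by
      by_contra hne
      have pca : r c a < r c (m c) := by
        have h1 := hpos c (m c) (hmE c)
        have h2 := rank_ne hinj hmE hEca hne
        omega
      exact hstab c a x hEca hEax hExc pca pax pxc
    by_cases hme : m e = c
    · -- m a = e
      have hmae : m a = e := by
        have h2 := hm3 e; rw [hme, hmca] at h2; exact h2
      have hmsd : m s ≠ d := fun h => hxs (minj (hd.trans h.symm))
      have psd : r s d < r s (m s) := by
        have h1 := hpos s (m s) (hmE s)
        have h2 := rank_ne hinj hmE hEsd hmsd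
        omega
      have hmts : m t = s := by
        by_contra hne
        have pts : r t s < r t (m t) := by
          have h1 := hpos t (m t) (hmE t)
          have h2 := rank_ne hinj hmE hEte (fun h => hat (minj (hmae.trans h.symm)))
          have h3 := rank_ne hinj hmE hEts hne
          omega
        exact hstab d t s hEdt hEts hEsd (by omega) pts psd
      have hmbz : m b = z := by
        by_contra hne
        have pbs : r b s < r b (m b) := by
          have h1 := hpos b (m b) (hmE b)
          have h2 := rank_ne hinj hmE hEbx hmbx
          have h3 := rank_ne hinj hmE hEbz hne
          have h4 := rank_ne hinj hmE hEbe (fun h => hab (minj (hmae.trans h.symm)))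
          have h5 := rank_ne hinj hmE hEbs (fun h => hbt (minj (h.trans hmts.symm)))
          omega
        exact hstab d b s hEdb hEbs hEsd (by omega) pbs psd
      have h3 := hm3 b; rw [hmbz] at h3
      have paz : r a z < r a (m a) := by rw [hmae, hrae, hraz]; omega
      have hnzd : ¬ (r z d < r z (m z)) := fun hp =>
        hstab d a z hEda hEaz hEzd (by omega) paz hp
      have hmzd : m z ≠ d := fun h => hub (hmdu.symm.trans (by rw [h] at h3; exact h3))
      have hmzc : m z ≠ c := fun h => hab (hmca.symm.trans (by rw [h] at h3; exact h3))
      have h5 := rank_ne hinj hmE hEzc hmzc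
      have h6 := rank_ne hinj hmE hEzd hmzd
      exact ⟨hmbz, by omega⟩
    · -- m e ∉ {c, d}
      have hmed : m e ≠ d := fun h => hxe (minj (hd.trans h.symm))
      have ped : r e d < r e (m e) := by
        have h1 := hpos e (m e) (hmE e)
        have h2 := rank_ne hinj hmE hEec hme
        have h3 := rank_ne hinj hmE hEed hmed
        omega
      have hmte : m t = e := by
        by_contra hne
        have pte : r t e < r t (m t) := by
          have h1 := hpos t (m t) (hmE t)
          have h2 := rank_ne hinj hmE hEte hne
          omega
        exact hstab d t e hEdt hEte hEed (by omega) pte ped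
      have hmbz : m b = z := by
        by_contra hne
        have pbe : r b e < r b (m b) := by
          have h1 := hpos b (m b) (hmE b)
          have h2 := rank_ne hinj hmE hEbx hmbx
          have h3 := rank_ne hinj hmE hEbz hne
          have h4 := rank_ne hinj hmE hEbe (fun h => hbt (minj (h.trans hmte.symm)))
          omega
        exact hstab d b e hEdb hEbe hEed (by omega) pbe ped
      have h3 := hm3 b; rw [hmbz] at h3
      have paz : r a z < r a (m a) := by
        have h1 := hpos a (m a) (hmE a)
        have h2 := rank_ne hinj hmE hEax hmax
        have h4 := rank_ne hinj hmE hEaz (fun h => hab (minj (h.trans hmbz.symm)))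
        omega
      have hnzd : ¬ (r z d < r z (m z)) := fun hp =>
        hstab d a z hEda hEaz hEzd (by omega) paz hp
      have hmzd : m z ≠ d := fun h => hub (hmdu.symm.trans (by rw [h] at h3; exact h3))
      have hmzc : m z ≠ c := fun h => hab (hmca.symm.trans (by rw [h] at h3; exact h3))
      have h5 := rank_ne hinj hmE hEzc hmzc
      have h6 := rank_ne hinj hmE hEzd hmzd
      exact ⟨hmbz, by omega⟩
  · -- Case (i): x is matched worse than ρx + 2
    exfalso
    have hgt2 : ρx + 2 < r x (m x) := by
      have h2 := rank_ne hinj hmE hExc hc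
      have h3 := rank_ne hinj hmE hExd hd
      omega
    have hmca : m c = a := by
      by_contra hne
      have pca : r c a < r c (m c) := by
        have h1 := hpos c (m c) (hmE c)
        have h2 := rank_ne hinj hmE hEca hne
        omega
      exact hstab c a x hEca hEax hExc pca pax (by omega)
    have hmda : m d = a := by
      by_contra hne
      have pda : r d a < r d (m d) := by
        have h1 := hpos d (m d) (hmE d)
        have h2 := rank_ne hinj hmE hEda hne
        omega
      exact hstab d a x hEda hEax hExd pda pax (by omega)
    exact hcd (minj (hmca.trans hmda.symm))

/-- Lemma-2 (double) gadget, `z`-role: if the attachment vertex `z` is matched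
worse than `ρz` while being the partner of an outside vertex `u`, then the
partner of `x` in the matching is the gadget vertex `a` or `b`. -/
lemma doubleZ
    (hpos : ∀ v w, E v w → 1 ≤ r v w)
    (hinj : ∀ v, Set.InjOn (r v) {w | E v w})
    (hmE : ∀ v, E v (m v)) (hm3 : ∀ v, m (m (m v)) = v)
    (hstab : ∀ u v w, E u v → E v w → E w u →
      r u v < r u (m u) → r v w < r v (m v) → r w u < r w (m w) → False)
    (x z a b c d e f s t u : W) (ρx ρz : ℕ)
    (hab : a ≠ b) (hcd : c ≠ d) (hat : a ≠ t) (hbt : b ≠ t) (hbf : b ≠ f)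
    (hua : u ≠ a) (hub : u ≠ b) (hut : u ≠ t) (huf : u ≠ f)
    (hez : e ≠ z) (hsz : s ≠ z)
    (hEec : E e c) (hrec : r e c = 1)
    (hEca : E c a) (hrca : r c a = 1)
    (hEda : E d a) (hrda : r d a = 1)
    (hEax : E a x) (hrax : r a x = 1)
    (hEbx : E b x) (hrbx : r b x = 1)
    (hEte : E t e) (hrte : r t e = 1)
    (hEsd : E s d) (hrsd : r s d = 1)
    (hEfe : E f e) (hrfe : r f e = 1)
    (hEts : E t s) (hrts : r t s = 2)
    (hEed : E e d) (hred : r e d = 2)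
    (hEcb : E c b) (hrcb : r c b = 2)
    (hEdb : E d b) (hrdb : r d b = 2)
    (hEaz : E a z) (hraz : r a z = 2)
    (hEbz : E b z) (hrbz : r b z = 2)
    (hEcf : E c f) (hrcf : r c f = 3)
    (hEae : E a e) (hrae : r a e = 4)
    (hEbe : E b e) (hrbe : r b e = 3)
    (hEdt : E d t) (hrdt : r d t = 3)
    (hEbs : E b s) (hrbs : r b s = 4)
    (hExc : E x c) (hrxc : r x c = ρx + 1)
    (hExd : E x d) (hrxd : r x d = ρx + 2)
    (hEzc : E z c) (hrzc : r z c = ρz + 1)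
    (hEzd : E z d) (hrzd : r z d = ρz + 2)
    (hmu : m u = z) (hgt : ρz < r z (m z)) :
    m a = x ∨ m b = x := by
  have minj : Function.Injective m := fun p q h => by
    have h2 := congrArg m (congrArg m h); rwa [hm3, hm3] at h2
  have hmaz : m a ≠ z := fun h => hua (minj (hmu.trans h.symm))
  have hmbz : m b ≠ z := fun h => hub (minj (hmu.trans h.symm))
  by_cases hc : m z = c
  · -- Case (ii): z is matched to c
    have h1 := hm3 z; rw [hc] at h1
    have hmcu : m c = u := minj (h1.trans hmu.symm)
    have pc : 3 < r c (m c) := by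
      have h1 := hpos c (m c) (hmE c)
      have h2 := rank_ne hinj hmE hEca (fun h => hua (hmcu.symm.trans h))
      have h3 := rank_ne hinj hmE hEcb (fun h => hub (hmcu.symm.trans h))
      have h4 := rank_ne hinj hmE hEcf (fun h => huf (hmcu.symm.trans h))
      omega
    have hmec : m e ≠ c := fun h => hez (minj (h.trans hc.symm))
    have pec : r e c < r e (m e) := by
      have h1 := hpos e (m e) (hmE e)
      have h2 := rank_ne hinj hmE hEec hmec
      omega
    have hmfe : m f = e := by
      by_contra hne
      have pfe : r f e < r f (m f) := by
        have h1 := hpos f (m f) (hmE f)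
        have h2 := rank_ne hinj hmE hEfe hne
        omega
      exact hstab f e c hEfe hEec hEcf pfe pec (by omega)
    refine Or.inr ?_
    by_contra hnbx
    have pbe : r b e < r b (m b) := by
      have h1 := hpos b (m b) (hmE b)
      have h2 := rank_ne hinj hmE hEbx hnbx
      have h3 := rank_ne hinj hmE hEbz hmbz
      have h4 := rank_ne hinj hmE hEbe (fun h => hbf (minj (h.trans hmfe.symm)))
      omega
    exact hstab e c b hEec hEcb hEbe pec (by omega) pbe
  by_cases hd : m z = d
  · -- Case (iii): z is matched to d
    have h1 := hm3 z; rw [hd] at h1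
    have hmdu : m d = u := minj (h1.trans hmu.symm)
    have pd : 3 < r d (m d) := by
      have h1 := hpos d (m d) (hmE d)
      have h2 := rank_ne hinj hmE hEda (fun h => hua (hmdu.symm.trans h))
      have h3 := rank_ne hinj hmE hEdb (fun h => hub (hmdu.symm.trans h))
      have h4 := rank_ne hinj hmE hEdt (fun h => hut (hmdu.symm.trans h))
      omega
    have pzc : r z c < r z (m z) := by rw [hd, hrzd, hrzc]; omega
    by_cases hax : m a = x
    · exact Or.inl hax
    have paz : r a z < r a (m a) := by
      have h1 := hpos a (m a) (hmE a)
      have h2 := rank_ne hinj hmE hEax hax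
      have h3 := rank_ne hinj hmE hEaz hmaz
      omega
    have hmca : m c = a := by
      by_contra hne
      have pca : r c a < r c (m c) := by
        have h1 := hpos c (m c) (hmE c)
        have h2 := rank_ne hinj hmE hEca hne
        omega
      exact hstab c a z hEca hEaz hEzc pca paz pzc
    by_cases hmae : m a = e
    · have hmsd : m s ≠ d := fun h => hsz (minj (h.trans hd.symm))
      have psd : r s d < r s (m s) := by
        have h1 := hpos s (m s) (hmE s)
        have h2 := rank_ne hinj hmE hEsd hmsd
        omega
      have hmts : m t = s := by
        by_contra hne
        have pts : r t s < r t (m t) := by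
          have h1 := hpos t (m t) (hmE t)
          have h2 := rank_ne hinj hmE hEte (fun h => hat (minj (hmae.trans h.symm)))
          have h3 := rank_ne hinj hmE hEts hne
          omega
        exact hstab d t s hEdt hEts hEsd (by omega) pts psd
      refine Or.inr ?_
      by_contra hnbx
      have pbs : r b s < r b (m b) := by
        have h1 := hpos b (m b) (hmE b)
        have h2 := rank_ne hinj hmE hEbx hnbx
        have h3 := rank_ne hinj hmE hEbz hmbz
        have h4 := rank_ne hinj hmE hEbe (fun h => hab (minj (hmae.trans h.symm)))
        have h5 := rank_ne hinj hmE hEbs (fun h => hbt (minj (h.trans hmts.symm)))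
        omega
      exact hstab d b s hEdb hEbs hEsd (by omega) pbs psd
    · have hmec : m e ≠ c := fun h =>
        hmae (by have h2 := hm3 e; rw [h, hmca] at h2; exact h2)
      have hmed : m e ≠ d := fun h => hez (minj (h.trans hd.symm))
      have ped : r e d < r e (m e) := by
        have h1 := hpos e (m e) (hmE e)
        have h2 := rank_ne hinj hmE hEec hmec
        have h3 := rank_ne hinj hmE hEed hmed
        omega
      have hmte : m t = e := by
        by_contra hne
        have pte : r t e < r t (m t) := by
          have h1 := hpos t (m t) (hmE t)
          have h2 := rank_ne hinj hmE hEte hne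
          omega
        exact hstab d t e hEdt hEte hEed (by omega) pte ped
      refine Or.inr ?_
      by_contra hnbx
      have pbe : r b e < r b (m b) := by
        have h1 := hpos b (m b) (hmE b)
        have h2 := rank_ne hinj hmE hEbx hnbx
        have h3 := rank_ne hinj hmE hEbz hmbz
        have h4 := rank_ne hinj hmE hEbe (fun h => hbt (minj (h.trans hmte.symm)))
        omega
      exact hstab d b e hEdb hEbe hEed (by omega) pbe ped
  · -- Case (i): z is matched worse than ρz + 2
    have hgt2 : ρz + 2 < r z (m z) := by
      have h2 := rank_ne hinj hmE hEzc hc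
      have h3 := rank_ne hinj hmE hEzd hd
      omega
    by_cases hax : m a = x
    · exact Or.inl hax
    have paz : r a z < r a (m a) := by
      have h1 := hpos a (m a) (hmE a)
      have h2 := rank_ne hinj hmE hEax hax
      have h3 := rank_ne hinj hmE hEaz hmaz
      omega
    have hmca : m c = a := by
      by_contra hne
      have pca : r c a < r c (m c) := by
        have h1 := hpos c (m c) (hmE c)
        have h2 := rank_ne hinj hmE hEca hne
        omega
      exact hstab c a z hEca hEaz hEzc pca paz (by omega)
    have hmda : m d = a := by
      by_contra hne
      have pda : r d a < r d (m d) := by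
        have h1 := hpos d (m d) (hmE d)
        have h2 := rank_ne hinj hmE hEda hne
        omega
      exact hstab d a z hEda hEaz hEzd pda paz (by omega)
    exact absurd (minj (hmca.trans hmda.symm)) hcd

end Gadgets
/-- **The size-18 counterexample.** Let `G` be the graph of a 3DSM problem on
the 54 vertices of `W` (18 of each gender) containing `H` as a subgraph with
its ranks, with disjoint single gadgets attached at vertices `0, 2, 7` and
disjoint double gadgets attached at the pairs `(1,4), (3,6), (5,8)`, with
`r'`-values `ρ_H(·) + 1` (so the `G`-edges of rank `≤ ρ_H(v)` out of an
`H`-vertex `v` are exactly its `H`-edges), and with the remaining ranks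
arbitrary. Then the 3DSM problem on `G` has no stable matching. -/
theorem size_18_counterexample
    (E : W → W → Prop) (r : W → W → ℕ)
    (hpos : ∀ v w, E v w → 1 ≤ r v w)
    (hinj : ∀ v, Set.InjOn (r v) {w | E v w})
    -- `H` is a subgraph of `G` with the same ranks
    (hH : ∀ a b, rk a b ≠ 0 → E (hv a) (hv b) ∧ r (hv a) (hv b) = rk a b)
    -- edges of rank `≤ ρ_H(a)` out of an `H`-vertex are exactly its `H`-edges
    (hsmall : ∀ a w, E (hv a) w → r (hv a) w ≤ ρ a → ∃ b, w = hv b ∧ rk a b ≠ 0)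
    -- the single gadgets at vertices 0, 2, 7
    (hsg : ∀ i : Fin 3, ∀ p ∈ singleSpec i, E p.1 p.2.1 ∧ r p.1 p.2.1 = p.2.2)
    -- the double gadgets at the pairs (1,4), (3,6), (5,8)
    (hdg : ∀ i : Fin 3, ∀ p ∈ doubleSpec i, E p.1 p.2.1 ∧ r p.1 p.2.1 = p.2.2) :
    ¬ ∃ m : W → W,
      (∀ v, E v (m v)) ∧ (∀ v, m (m (m v)) = v) ∧
      (∀ u v w, E u v → E v w → E w u →
        r u v < r u (m u) → r v w < r v (m v) → r w u < r w (m w) → False) := by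

  rintro ⟨m, hmE, hm3, hstab⟩
  have minj : Function.Injective m := fun p q h => by
    have h2 := congrArg m (congrArg m h); rwa [hm3, hm3] at h2
  have hmatch : ∀ v : Fin 9, r (hv v) (m (hv v)) ≤ ρ v →
      ∃ w : Fin 9, m (hv v) = hv w ∧ rk v w ≠ 0 := by
    intro v hle
    obtain ⟨w, hw, hne⟩ := hsmall v (m (hv v)) (hmE (hv v)) hle
    exact ⟨w, hw, hne⟩
  have prefO : ∀ u v : Fin 9, rk u v ≠ 0 → rk u v ≤ ρ u →
      ¬ (r (hv u) (m (hv u)) ≤ ρ u) → r (hv u) (hv v) < r (hv u) (m (hv u)) := by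
    intro u v h1 h2 h3
    rw [(hH u v h1).2]; omega
  have prefI : ∀ u v w : Fin 9, rk u v ≠ 0 → m (hv u) = hv w → rk u w ≠ 0 →
      rk u v < rk u w → r (hv u) (hv v) < r (hv u) (m (hv u)) := by
    intro u v w h1 hm h2 hlt
    rw [(hH u v h1).2, hm, (hH u w h2).2]; exact hlt
  have blockH : ∀ u v w : Fin 9, rk u v ≠ 0 → rk v w ≠ 0 → rk w u ≠ 0 →
      r (hv u) (hv v) < r (hv u) (m (hv u)) →
      r (hv v) (hv w) < r (hv v) (m (hv v)) →
      r (hv w) (hv u) < r (hv w) (m (hv w)) → False := fun u v w h1 h2 h3 =>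
    hstab _ _ _ (hH u v h1).1 (hH v w h2).1 (hH w u h3).1
  have T0_0 : ∀ u : Fin 9, m (hv u) = hv 0 →
      ¬ (r (hv 0) (m (hv 0)) ≤ ρ 0) → False := by
    intro u hmu hn
    have g := hsg 0
    simp only [singleSpec, show sv 0 = 0 from by decide, List.forall_mem_cons,
      List.forall_mem_nil] at g
    obtain ⟨g1, g2, g3, g4, g5, g6, g7, g8, g9, g10, g11, g12, g13, g14, g15, g16, g17, -⟩ := g
    exact singleKey hpos hinj hmE hm3 hstab
      (hv 0) (sg 0 0) (sg 0 1) (sg 0 2) (sg 0 3) (sg 0 4) (sg 0 5) (sg 0 6) (hv u) (ρ 0)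
      (by decide) (by decide) (by decide) (by decide) (by simp [hv, sg]) (by simp [hv, sg]) (by simp [hv, sg]) (by decide) (by decide)
      g1.1 g1.2 g2.1 g2.2 g3.1 g3.2 g4.1 g4.2 g5.1 g5.2 g6.1 g6.2 g7.1 g7.2 g8.1 g8.2 g9.1 g9.2 g10.1 g10.2 g11.1 g11.2 g12.1 g12.2 g13.1 g13.2 g14.1 g14.2 g15.1 g15.2 g16.1 g16.2 g17.1 g17.2
      hmu (not_le.mp hn)
  have T0_2 : ∀ u : Fin 9, m (hv u) = hv 2 →
      ¬ (r (hv 2) (m (hv 2)) ≤ ρ 2) → False := by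
    intro u hmu hn
    have g := hsg 1
    simp only [singleSpec, show sv 1 = 2 from by decide, List.forall_mem_cons,
      List.forall_mem_nil] at g
    obtain ⟨g1, g2, g3, g4, g5, g6, g7, g8, g9, g10, g11, g12, g13, g14, g15, g16, g17, -⟩ := g
    exact singleKey hpos hinj hmE hm3 hstab
      (hv 2) (sg 1 0) (sg 1 1) (sg 1 2) (sg 1 3) (sg 1 4) (sg 1 5) (sg 1 6) (hv u) (ρ 2)
      (by decide) (by decide) (by decide) (by decide) (by simp [hv, sg]) (by simp [hv, sg]) (by simp [hv, sg]) (by decide) (by decide)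
      g1.1 g1.2 g2.1 g2.2 g3.1 g3.2 g4.1 g4.2 g5.1 g5.2 g6.1 g6.2 g7.1 g7.2 g8.1 g8.2 g9.1 g9.2 g10.1 g10.2 g11.1 g11.2 g12.1 g12.2 g13.1 g13.2 g14.1 g14.2 g15.1 g15.2 g16.1 g16.2 g17.1 g17.2
      hmu (not_le.mp hn)
  have T0_7 : ∀ u : Fin 9, m (hv u) = hv 7 →
      ¬ (r (hv 7) (m (hv 7)) ≤ ρ 7) → False := by
    intro u hmu hn
    have g := hsg 2
    simp only [singleSpec, show sv 2 = 7 from by decide, List.forall_mem_cons,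
      List.forall_mem_nil] at g
    obtain ⟨g1, g2, g3, g4, g5, g6, g7, g8, g9, g10, g11, g12, g13, g14, g15, g16, g17, -⟩ := g
    exact singleKey hpos hinj hmE hm3 hstab
      (hv 7) (sg 2 0) (sg 2 1) (sg 2 2) (sg 2 3) (sg 2 4) (sg 2 5) (sg 2 6) (hv u) (ρ 7)
      (by decide) (by decide) (by decide) (by decide) (by simp [hv, sg]) (by simp [hv, sg]) (by simp [hv, sg]) (by decide) (by decide)
      g1.1 g1.2 g2.1 g2.2 g3.1 g3.2 g4.1 g4.2 g5.1 g5.2 g6.1 g6.2 g7.1 g7.2 g8.1 g8.2 g9.1 g9.2 g10.1 g10.2 g11.1 g11.2 g12.1 g12.2 g13.1 g13.2 g14.1 g14.2 g15.1 g15.2 g16.1 g16.2 g17.1 g17.2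
      hmu (not_le.mp hn)
  have TX1 : ∀ u : Fin 9, m (hv u) = hv 1 →
      ¬ (r (hv 1) (m (hv 1)) ≤ ρ 1) →
      m (dg 0 1) = hv 4 ∧ r (hv 4) (m (hv 4)) ≤ ρ 4 := by
    intro u hmu hn
    have g := hdg 0
    simp only [doubleSpec, show xv 0 = 1 from by decide,
      show zv 0 = 4 from by decide, List.forall_mem_cons,
      List.forall_mem_nil] at g
    obtain ⟨g1, g2, g3, g4, g5, g6, g7, g8, g9, g10, g11, g12, g13, g14, g15, g16, g17, g18, g19, g20, g21, g22, g23, -⟩ := g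
    exact doubleX hpos hinj hmE hm3 hstab
      (hv 1) (hv 4) (dg 0 0) (dg 0 1) (dg 0 2) (dg 0 3) (dg 0 4) (dg 0 5) (dg 0 6) (dg 0 7) (hv u) (ρ 1) (ρ 4)
      (by decide) (by decide) (by decide) (by decide) (by decide) (by simp [hv, dg]) (by simp [hv, dg]) (by simp [hv, dg]) (by simp [hv, dg]) (by decide) (by decide)
      g1.1 g1.2 g2.1 g2.2 g3.1 g3.2 g4.1 g4.2 g5.1 g5.2 g6.1 g6.2 g7.1 g7.2 g8.1 g8.2 g9.1 g9.2 g10.1 g10.2 g11.1 g11.2 g12.1 g12.2 g13.1 g13.2 g14.1 g14.2 g15.1 g15.2 g16.1 g16.2 g17.1 g17.2 g18.1 g18.2 g19.1 g19.2 g20.1 g20.2 g21.1 g21.2 g22.1 g22.2 g23.1 g23.2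
      hmu (not_le.mp hn)
  have TZ4 : ∀ u : Fin 9, m (hv u) = hv 4 →
      ¬ (r (hv 4) (m (hv 4)) ≤ ρ 4) →
      m (dg 0 0) = hv 1 ∨ m (dg 0 1) = hv 1 := by
    intro u hmu hn
    have g := hdg 0
    simp only [doubleSpec, show xv 0 = 1 from by decide,
      show zv 0 = 4 from by decide, List.forall_mem_cons,
      List.forall_mem_nil] at g
    obtain ⟨g1, g2, g3, g4, g5, g6, g7, g8, g9, g10, g11, g12, g13, g14, g15, g16, g17, g18, g19, g20, g21, g22, g23, -⟩ := g
    exact doubleZ hpos hinj hmE hm3 hstab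
      (hv 1) (hv 4) (dg 0 0) (dg 0 1) (dg 0 2) (dg 0 3) (dg 0 4) (dg 0 5) (dg 0 6) (dg 0 7) (hv u) (ρ 1) (ρ 4)
      (by decide) (by decide) (by decide) (by decide) (by decide) (by simp [hv, dg]) (by simp [hv, dg]) (by simp [hv, dg]) (by simp [hv, dg]) (by decide) (by decide)
      g1.1 g1.2 g2.1 g2.2 g3.1 g3.2 g4.1 g4.2 g5.1 g5.2 g6.1 g6.2 g7.1 g7.2 g8.1 g8.2 g9.1 g9.2 g10.1 g10.2 g11.1 g11.2 g12.1 g12.2 g13.1 g13.2 g14.1 g14.2 g15.1 g15.2 g16.1 g16.2 g17.1 g17.2 g18.1 g18.2 g19.1 g19.2 g20.1 g20.2 g21.1 g21.2 g22.1 g22.2 g23.1 g23.2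
      hmu (not_le.mp hn)
  have TX3 : ∀ u : Fin 9, m (hv u) = hv 3 →
      ¬ (r (hv 3) (m (hv 3)) ≤ ρ 3) →
      m (dg 1 1) = hv 6 ∧ r (hv 6) (m (hv 6)) ≤ ρ 6 := by
    intro u hmu hn
    have g := hdg 1
    simp only [doubleSpec, show xv 1 = 3 from by decide,
      show zv 1 = 6 from by decide, List.forall_mem_cons,
      List.forall_mem_nil] at g
    obtain ⟨g1, g2, g3, g4, g5, g6, g7, g8, g9, g10, g11, g12, g13, g14, g15, g16, g17, g18, g19, g20, g21, g22, g23, -⟩ := g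
    exact doubleX hpos hinj hmE hm3 hstab
      (hv 3) (hv 6) (dg 1 0) (dg 1 1) (dg 1 2) (dg 1 3) (dg 1 4) (dg 1 5) (dg 1 6) (dg 1 7) (hv u) (ρ 3) (ρ 6)
      (by decide) (by decide) (by decide) (by decide) (by decide) (by simp [hv, dg]) (by simp [hv, dg]) (by simp [hv, dg]) (by simp [hv, dg]) (by decide) (by decide)
      g1.1 g1.2 g2.1 g2.2 g3.1 g3.2 g4.1 g4.2 g5.1 g5.2 g6.1 g6.2 g7.1 g7.2 g8.1 g8.2 g9.1 g9.2 g10.1 g10.2 g11.1 g11.2 g12.1 g12.2 g13.1 g13.2 g14.1 g14.2 g15.1 g15.2 g16.1 g16.2 g17.1 g17.2 g18.1 g18.2 g19.1 g19.2 g20.1 g20.2 g21.1 g21.2 g22.1 g22.2 g23.1 g23.2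
      hmu (not_le.mp hn)
  have TZ6 : ∀ u : Fin 9, m (hv u) = hv 6 →
      ¬ (r (hv 6) (m (hv 6)) ≤ ρ 6) →
      m (dg 1 0) = hv 3 ∨ m (dg 1 1) = hv 3 := by
    intro u hmu hn
    have g := hdg 1
    simp only [doubleSpec, show xv 1 = 3 from by decide,
      show zv 1 = 6 from by decide, List.forall_mem_cons,
      List.forall_mem_nil] at g
    obtain ⟨g1, g2, g3, g4, g5, g6, g7, g8, g9, g10, g11, g12, g13, g14, g15, g16, g17, g18, g19, g20, g21, g22, g23, -⟩ := g
    exact doubleZ hpos hinj hmE hm3 hstab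
      (hv 3) (hv 6) (dg 1 0) (dg 1 1) (dg 1 2) (dg 1 3) (dg 1 4) (dg 1 5) (dg 1 6) (dg 1 7) (hv u) (ρ 3) (ρ 6)
      (by decide) (by decide) (by decide) (by decide) (by decide) (by simp [hv, dg]) (by simp [hv, dg]) (by simp [hv, dg]) (by simp [hv, dg]) (by decide) (by decide)
      g1.1 g1.2 g2.1 g2.2 g3.1 g3.2 g4.1 g4.2 g5.1 g5.2 g6.1 g6.2 g7.1 g7.2 g8.1 g8.2 g9.1 g9.2 g10.1 g10.2 g11.1 g11.2 g12.1 g12.2 g13.1 g13.2 g14.1 g14.2 g15.1 g15.2 g16.1 g16.2 g17.1 g17.2 g18.1 g18.2 g19.1 g19.2 g20.1 g20.2 g21.1 g21.2 g22.1 g22.2 g23.1 g23.2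
      hmu (not_le.mp hn)
  have TX5 : ∀ u : Fin 9, m (hv u) = hv 5 →
      ¬ (r (hv 5) (m (hv 5)) ≤ ρ 5) →
      m (dg 2 1) = hv 8 ∧ r (hv 8) (m (hv 8)) ≤ ρ 8 := by
    intro u hmu hn
    have g := hdg 2
    simp only [doubleSpec, show xv 2 = 5 from by decide,
      show zv 2 = 8 from by decide, List.forall_mem_cons,
      List.forall_mem_nil] at g
    obtain ⟨g1, g2, g3, g4, g5, g6, g7, g8, g9, g10, g11, g12, g13, g14, g15, g16, g17, g18, g19, g20, g21, g22, g23, -⟩ := g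
    exact doubleX hpos hinj hmE hm3 hstab
      (hv 5) (hv 8) (dg 2 0) (dg 2 1) (dg 2 2) (dg 2 3) (dg 2 4) (dg 2 5) (dg 2 6) (dg 2 7) (hv u) (ρ 5) (ρ 8)
      (by decide) (by decide) (by decide) (by decide) (by decide) (by simp [hv, dg]) (by simp [hv, dg]) (by simp [hv, dg]) (by simp [hv, dg]) (by decide) (by decide)
      g1.1 g1.2 g2.1 g2.2 g3.1 g3.2 g4.1 g4.2 g5.1 g5.2 g6.1 g6.2 g7.1 g7.2 g8.1 g8.2 g9.1 g9.2 g10.1 g10.2 g11.1 g11.2 g12.1 g12.2 g13.1 g13.2 g14.1 g14.2 g15.1 g15.2 g16.1 g16.2 g17.1 g17.2 g18.1 g18.2 g19.1 g19.2 g20.1 g20.2 g21.1 g21.2 g22.1 g22.2 g23.1 g23.2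
      hmu (not_le.mp hn)
  have TZ8 : ∀ u : Fin 9, m (hv u) = hv 8 →
      ¬ (r (hv 8) (m (hv 8)) ≤ ρ 8) →
      m (dg 2 0) = hv 5 ∨ m (dg 2 1) = hv 5 := by
    intro u hmu hn
    have g := hdg 2
    simp only [doubleSpec, show xv 2 = 5 from by decide,
      show zv 2 = 8 from by decide, List.forall_mem_cons,
      List.forall_mem_nil] at g
    obtain ⟨g1, g2, g3, g4, g5, g6, g7, g8, g9, g10, g11, g12, g13, g14, g15, g16, g17, g18, g19, g20, g21, g22, g23, -⟩ := g
    exact doubleZ hpos hinj hmE hm3 hstab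
      (hv 5) (hv 8) (dg 2 0) (dg 2 1) (dg 2 2) (dg 2 3) (dg 2 4) (dg 2 5) (dg 2 6) (dg 2 7) (hv u) (ρ 5) (ρ 8)
      (by decide) (by decide) (by decide) (by decide) (by decide) (by simp [hv, dg]) (by simp [hv, dg]) (by simp [hv, dg]) (by simp [hv, dg]) (by decide) (by decide)
      g1.1 g1.2 g2.1 g2.2 g3.1 g3.2 g4.1 g4.2 g5.1 g5.2 g6.1 g6.2 g7.1 g7.2 g8.1 g8.2 g9.1 g9.2 g10.1 g10.2 g11.1 g11.2 g12.1 g12.2 g13.1 g13.2 g14.1 g14.2 g15.1 g15.2 g16.1 g16.2 g17.1 g17.2 g18.1 g18.2 g19.1 g19.2 g20.1 g20.2 g21.1 g21.2 g22.1 g22.2 g23.1 g23.2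
      hmu (not_le.mp hn)
  by_cases hS3 : r (hv 3) (m (hv 3)) ≤ ρ 3
  · obtain ⟨w3, hw3, hrk3⟩ := hmatch 3 hS3
    have hcs3 := (by decide : ∀ w : Fin 9, rk 3 w ≠ 0 → w = 1 ∨ w = 4) w3 hrk3
    rcases hcs3 with rfl | rfl
    · -- 3 matched to 1
      by_cases hS7 : r (hv 7) (m (hv 7)) ≤ ρ 7
      · obtain ⟨w7, hw7, hrk7⟩ := hmatch 7 hS7
        have hcs7 := (by decide : ∀ w : Fin 9, rk 7 w ≠ 0 → w = 8) w7 hrk7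
        rcases hcs7 with rfl
        · -- 7 matched to 8
          by_cases hS5 : r (hv 5) (m (hv 5)) ≤ ρ 5
          · obtain ⟨w5, hw5, hrk5⟩ := hmatch 5 hS5
            have hcs5 := (by decide : ∀ w : Fin 9, rk 5 w ≠ 0 → w = 0 ∨ w = 3) w5 hrk5
            rcases hcs5 with rfl | rfl
            · -- 5 matched to 0
              by_cases hS0 : r (hv 0) (m (hv 0)) ≤ ρ 0
              · obtain ⟨w0, hw0, hrk0⟩ := hmatch 0 hS0
                have hcs0 := (by decide : ∀ w : Fin 9, rk 0 w ≠ 0 → w = 1 ∨ w = 7) w0 hrk0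
                rcases hcs0 with rfl | rfl
                · -- 0 matched to 1
                  exact absurd (minj (hw0.trans hw3.symm)) (by decide)
                · -- 0 matched to 7
                  have h3 := hm3 (hv 5)
                  rw [hw5, hw0, hw7] at h3
                  exact absurd h3 (by decide)
              · -- 0 unmatched in H
                exact T0_0 5 hw5 hS0
            · -- 5 matched to 3
              by_cases hS2 : r (hv 2) (m (hv 2)) ≤ ρ 2
              · obtain ⟨w2, hw2, hrk2⟩ := hmatch 2 hS2
                have hcs2 := (by decide : ∀ w : Fin 9, rk 2 w ≠ 0 → w = 3) w2 hrk2
                rcases hcs2 with rfl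
                · -- 2 matched to 3
                  exact absurd (minj (hw2.trans hw5.symm)) (by decide)
              · -- 2 unmatched in H
                by_cases hS4 : r (hv 4) (m (hv 4)) ≤ ρ 4
                · obtain ⟨w4, hw4, hrk4⟩ := hmatch 4 hS4
                  have hcs4 := (by decide : ∀ w : Fin 9, rk 4 w ≠ 0 → w = 2 ∨ w = 5 ∨ w = 8) w4 hrk4
                  rcases hcs4 with rfl | rfl | rfl
                  · -- 4 matched to 2
                    exact T0_2 4 hw4 hS2
                  · -- 4 matched to 5
                    have h3 := hm3 (hv 4)
                    rw [hw4, hw5, hw3] at h3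
                    exact absurd h3 (by decide)
                  · -- 4 matched to 8
                    exact absurd (minj (hw4.trans hw7.symm)) (by decide)
                · -- 4 unmatched in H
                  exact blockH 2 3 4 (by decide) (by decide) (by decide)
                    (prefO 2 3 (by decide) (by decide) hS2) (prefI 3 4 1 (by decide) hw3 (by decide) (by decide)) (prefO 4 2 (by decide) (by decide) hS4)
          · -- 5 unmatched in H
            by_cases hS4 : r (hv 4) (m (hv 4)) ≤ ρ 4
            · obtain ⟨w4, hw4, hrk4⟩ := hmatch 4 hS4
              have hcs4 := (by decide : ∀ w : Fin 9, rk 4 w ≠ 0 → w = 2 ∨ w = 5 ∨ w = 8) w4 hrk4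
              rcases hcs4 with rfl | rfl | rfl
              · -- 4 matched to 2
                exact blockH 3 4 5 (by decide) (by decide) (by decide)
                  (prefI 3 4 1 (by decide) hw3 (by decide) (by decide)) (prefI 4 5 2 (by decide) hw4 (by decide) (by decide)) (prefO 5 3 (by decide) (by decide) hS5)
              · -- 4 matched to 5
                exact absurd (minj ((TX5 4 hw4 hS5).1.trans hw7.symm)) (by decide)
              · -- 4 matched to 8
                exact absurd (minj (hw4.trans hw7.symm)) (by decide)
            · -- 4 unmatched in H
              exact blockH 3 4 5 (by decide) (by decide) (by decide)
                (prefI 3 4 1 (by decide) hw3 (by decide) (by decide)) (prefO 4 5 (by decide) (by decide) hS4) (prefO 5 3 (by decide) (by decide) hS5)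
      · -- 7 unmatched in H
        by_cases hS0 : r (hv 0) (m (hv 0)) ≤ ρ 0
        · obtain ⟨w0, hw0, hrk0⟩ := hmatch 0 hS0
          have hcs0 := (by decide : ∀ w : Fin 9, rk 0 w ≠ 0 → w = 1 ∨ w = 7) w0 hrk0
          rcases hcs0 with rfl | rfl
          · -- 0 matched to 1
            exact absurd (minj (hw0.trans hw3.symm)) (by decide)
          · -- 0 matched to 7
            exact T0_7 0 hw0 hS7
        · -- 0 unmatched in H
          by_cases hS8 : r (hv 8) (m (hv 8)) ≤ ρ 8
          · obtain ⟨w8, hw8, hrk8⟩ := hmatch 8 hS8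
            have hcs8 := (by decide : ∀ w : Fin 9, rk 8 w ≠ 0 → w = 0 ∨ w = 6) w8 hrk8
            rcases hcs8 with rfl | rfl
            · -- 8 matched to 0
              exact T0_0 8 hw8 hS0
            · -- 8 matched to 6
              exact blockH 0 7 8 (by decide) (by decide) (by decide)
                (prefO 0 7 (by decide) (by decide) hS0) (prefO 7 8 (by decide) (by decide) hS7) (prefI 8 0 6 (by decide) hw8 (by decide) (by decide))
          · -- 8 unmatched in H
            exact blockH 0 7 8 (by decide) (by decide) (by decide)
              (prefO 0 7 (by decide) (by decide) hS0) (prefO 7 8 (by decide) (by decide) hS7) (prefO 8 0 (by decide) (by decide) hS8)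
    · -- 3 matched to 4
      by_cases hS1 : r (hv 1) (m (hv 1)) ≤ ρ 1
      · obtain ⟨w1, hw1, hrk1⟩ := hmatch 1 hS1
        have hcs1 := (by decide : ∀ w : Fin 9, rk 1 w ≠ 0 → w = 2 ∨ w = 5) w1 hrk1
        rcases hcs1 with rfl | rfl
        · -- 1 matched to 2
          by_cases hS2 : r (hv 2) (m (hv 2)) ≤ ρ 2
          · obtain ⟨w2, hw2, hrk2⟩ := hmatch 2 hS2
            have hcs2 := (by decide : ∀ w : Fin 9, rk 2 w ≠ 0 → w = 3) w2 hrk2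
            rcases hcs2 with rfl
            · -- 2 matched to 3
              have h3 := hm3 (hv 1)
              rw [hw1, hw2, hw3] at h3
              exact absurd h3 (by decide)
          · -- 2 unmatched in H
            exact T0_2 1 hw1 hS2
        · -- 1 matched to 5
          by_cases hS0 : r (hv 0) (m (hv 0)) ≤ ρ 0
          · obtain ⟨w0, hw0, hrk0⟩ := hmatch 0 hS0
            have hcs0 := (by decide : ∀ w : Fin 9, rk 0 w ≠ 0 → w = 1 ∨ w = 7) w0 hrk0
            rcases hcs0 with rfl | rfl
            · -- 0 matched to 1
              by_cases hS4 : r (hv 4) (m (hv 4)) ≤ ρ 4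
              · obtain ⟨w4, hw4, hrk4⟩ := hmatch 4 hS4
                have hcs4 := (by decide : ∀ w : Fin 9, rk 4 w ≠ 0 → w = 2 ∨ w = 5 ∨ w = 8) w4 hrk4
                rcases hcs4 with rfl | rfl | rfl
                · -- 4 matched to 2
                  by_cases hS6 : r (hv 6) (m (hv 6)) ≤ ρ 6
                  · obtain ⟨w6, hw6, hrk6⟩ := hmatch 6 hS6
                    have hcs6 := (by decide : ∀ w : Fin 9, rk 6 w ≠ 0 → w = 4) w6 hrk6
                    rcases hcs6 with rfl
                    · -- 6 matched to 4
                      exact absurd (minj (hw3.trans hw6.symm)) (by decide)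
                  · -- 6 unmatched in H
                    by_cases hS8 : r (hv 8) (m (hv 8)) ≤ ρ 8
                    · obtain ⟨w8, hw8, hrk8⟩ := hmatch 8 hS8
                      have hcs8 := (by decide : ∀ w : Fin 9, rk 8 w ≠ 0 → w = 0 ∨ w = 6) w8 hrk8
                      rcases hcs8 with rfl | rfl
                      · -- 8 matched to 0
                        have h3 := hm3 (hv 8)
                        rw [hw8, hw0, hw1] at h3
                        exact absurd h3 (by decide)
                      · -- 8 matched to 6
                        rcases TZ6 8 hw8 hS6 with hg | hg
                        · have h3 := hm3 (dg 1 0)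
                          rw [hg, hw3, hw4] at h3
                          exact absurd h3 (by decide)
                        · have h3 := hm3 (dg 1 1)
                          rw [hg, hw3, hw4] at h3
                          exact absurd h3 (by decide)
                    · -- 8 unmatched in H
                      exact blockH 4 8 6 (by decide) (by decide) (by decide)
                        (prefI 4 8 2 (by decide) hw4 (by decide) (by decide)) (prefO 8 6 (by decide) (by decide) hS8) (prefO 6 4 (by decide) (by decide) hS6)
                · -- 4 matched to 5
                  exact absurd (minj (hw1.trans hw4.symm)) (by decide)
                · -- 4 matched to 8
                  by_cases hS8 : r (hv 8) (m (hv 8)) ≤ ρ 8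
                  · obtain ⟨w8, hw8, hrk8⟩ := hmatch 8 hS8
                    have hcs8 := (by decide : ∀ w : Fin 9, rk 8 w ≠ 0 → w = 0 ∨ w = 6) w8 hrk8
                    rcases hcs8 with rfl | rfl
                    · -- 8 matched to 0
                      have h3 := hm3 (hv 3)
                      rw [hw3, hw4, hw8] at h3
                      exact absurd h3 (by decide)
                    · -- 8 matched to 6
                      have h3 := hm3 (hv 3)
                      rw [hw3, hw4, hw8] at h3
                      exact absurd h3 (by decide)
                  · -- 8 unmatched in H
                    rcases TZ8 4 hw4 hS8 with hg | hg <;>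
                      exact absurd (minj (hg.trans hw1.symm)) (by decide)
              · -- 4 unmatched in H
                rcases TZ4 3 hw3 hS4 with hg | hg <;>
                  exact absurd (minj (hg.trans hw0.symm)) (by decide)
            · -- 0 matched to 7
              by_cases hS5 : r (hv 5) (m (hv 5)) ≤ ρ 5
              · obtain ⟨w5, hw5, hrk5⟩ := hmatch 5 hS5
                have hcs5 := (by decide : ∀ w : Fin 9, rk 5 w ≠ 0 → w = 0 ∨ w = 3) w5 hrk5
                rcases hcs5 with rfl | rfl
                · -- 5 matched to 0
                  have h3 := hm3 (hv 1)
                  rw [hw1, hw5, hw0] at h3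
                  exact absurd h3 (by decide)
                · -- 5 matched to 3
                  have h3 := hm3 (hv 1)
                  rw [hw1, hw5, hw3] at h3
                  exact absurd h3 (by decide)
              · -- 5 unmatched in H
                by_cases hS7 : r (hv 7) (m (hv 7)) ≤ ρ 7
                · obtain ⟨w7, hw7, hrk7⟩ := hmatch 7 hS7
                  have hcs7 := (by decide : ∀ w : Fin 9, rk 7 w ≠ 0 → w = 8) w7 hrk7
                  rcases hcs7 with rfl
                  · -- 7 matched to 8
                    exact absurd (minj ((TX5 1 hw1 hS5).1.trans hw7.symm)) (by decide)
                · -- 7 unmatched in H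
                  exact T0_7 0 hw0 hS7
          · -- 0 unmatched in H
            by_cases hS5 : r (hv 5) (m (hv 5)) ≤ ρ 5
            · obtain ⟨w5, hw5, hrk5⟩ := hmatch 5 hS5
              have hcs5 := (by decide : ∀ w : Fin 9, rk 5 w ≠ 0 → w = 0 ∨ w = 3) w5 hrk5
              rcases hcs5 with rfl | rfl
              · -- 5 matched to 0
                exact T0_0 5 hw5 hS0
              · -- 5 matched to 3
                have h3 := hm3 (hv 1)
                rw [hw1, hw5, hw3] at h3
                exact absurd h3 (by decide)
            · -- 5 unmatched in H
              by_cases hS7 : r (hv 7) (m (hv 7)) ≤ ρ 7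
              · obtain ⟨w7, hw7, hrk7⟩ := hmatch 7 hS7
                have hcs7 := (by decide : ∀ w : Fin 9, rk 7 w ≠ 0 → w = 8) w7 hrk7
                rcases hcs7 with rfl
                · -- 7 matched to 8
                  exact absurd (minj ((TX5 1 hw1 hS5).1.trans hw7.symm)) (by decide)
              · -- 7 unmatched in H
                by_cases hS8 : r (hv 8) (m (hv 8)) ≤ ρ 8
                · obtain ⟨w8, hw8, hrk8⟩ := hmatch 8 hS8
                  have hcs8 := (by decide : ∀ w : Fin 9, rk 8 w ≠ 0 → w = 0 ∨ w = 6) w8 hrk8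
                  rcases hcs8 with rfl | rfl
                  · -- 8 matched to 0
                    exact T0_0 8 hw8 hS0
                  · -- 8 matched to 6
                    exact blockH 0 7 8 (by decide) (by decide) (by decide)
                      (prefO 0 7 (by decide) (by decide) hS0) (prefO 7 8 (by decide) (by decide) hS7) (prefI 8 0 6 (by decide) hw8 (by decide) (by decide))
                · -- 8 unmatched in H
                  exact absurd (TX5 1 hw1 hS5).2 hS8
      · -- 1 unmatched in H
        by_cases hS0 : r (hv 0) (m (hv 0)) ≤ ρ 0
        · obtain ⟨w0, hw0, hrk0⟩ := hmatch 0 hS0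
          have hcs0 := (by decide : ∀ w : Fin 9, rk 0 w ≠ 0 → w = 1 ∨ w = 7) w0 hrk0
          rcases hcs0 with rfl | rfl
          · -- 0 matched to 1
            exact absurd (minj ((TX1 0 hw0 hS1).1.trans hw3.symm)) (by decide)
          · -- 0 matched to 7
            by_cases hS5 : r (hv 5) (m (hv 5)) ≤ ρ 5
            · obtain ⟨w5, hw5, hrk5⟩ := hmatch 5 hS5
              have hcs5 := (by decide : ∀ w : Fin 9, rk 5 w ≠ 0 → w = 0 ∨ w = 3) w5 hrk5
              rcases hcs5 with rfl | rfl
              · -- 5 matched to 0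
                by_cases hS7 : r (hv 7) (m (hv 7)) ≤ ρ 7
                · obtain ⟨w7, hw7, hrk7⟩ := hmatch 7 hS7
                  have hcs7 := (by decide : ∀ w : Fin 9, rk 7 w ≠ 0 → w = 8) w7 hrk7
                  rcases hcs7 with rfl
                  · -- 7 matched to 8
                    have h3 := hm3 (hv 5)
                    rw [hw5, hw0, hw7] at h3
                    exact absurd h3 (by decide)
                · -- 7 unmatched in H
                  exact T0_7 0 hw0 hS7
              · -- 5 matched to 3
                exact blockH 0 1 5 (by decide) (by decide) (by decide)
                  (prefI 0 1 7 (by decide) hw0 (by decide) (by decide)) (prefO 1 5 (by decide) (by decide) hS1) (prefI 5 0 3 (by decide) hw5 (by decide) (by decide))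
            · -- 5 unmatched in H
              exact blockH 0 1 5 (by decide) (by decide) (by decide)
                (prefI 0 1 7 (by decide) hw0 (by decide) (by decide)) (prefO 1 5 (by decide) (by decide) hS1) (prefO 5 0 (by decide) (by decide) hS5)
        · -- 0 unmatched in H
          by_cases hS5 : r (hv 5) (m (hv 5)) ≤ ρ 5
          · obtain ⟨w5, hw5, hrk5⟩ := hmatch 5 hS5
            have hcs5 := (by decide : ∀ w : Fin 9, rk 5 w ≠ 0 → w = 0 ∨ w = 3) w5 hrk5
            rcases hcs5 with rfl | rfl
            · -- 5 matched to 0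
              exact T0_0 5 hw5 hS0
            · -- 5 matched to 3
              exact blockH 0 1 5 (by decide) (by decide) (by decide)
                (prefO 0 1 (by decide) (by decide) hS0) (prefO 1 5 (by decide) (by decide) hS1) (prefI 5 0 3 (by decide) hw5 (by decide) (by decide))
          · -- 5 unmatched in H
            exact blockH 0 1 5 (by decide) (by decide) (by decide)
              (prefO 0 1 (by decide) (by decide) hS0) (prefO 1 5 (by decide) (by decide) hS1) (prefO 5 0 (by decide) (by decide) hS5)
  · -- 3 unmatched in H
    by_cases hS2 : r (hv 2) (m (hv 2)) ≤ ρ 2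
    · obtain ⟨w2, hw2, hrk2⟩ := hmatch 2 hS2
      have hcs2 := (by decide : ∀ w : Fin 9, rk 2 w ≠ 0 → w = 3) w2 hrk2
      rcases hcs2 with rfl
      · -- 2 matched to 3
        by_cases hS6 : r (hv 6) (m (hv 6)) ≤ ρ 6
        · obtain ⟨w6, hw6, hrk6⟩ := hmatch 6 hS6
          have hcs6 := (by decide : ∀ w : Fin 9, rk 6 w ≠ 0 → w = 4) w6 hrk6
          rcases hcs6 with rfl
          · -- 6 matched to 4
            by_cases hS4 : r (hv 4) (m (hv 4)) ≤ ρ 4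
            · obtain ⟨w4, hw4, hrk4⟩ := hmatch 4 hS4
              have hcs4 := (by decide : ∀ w : Fin 9, rk 4 w ≠ 0 → w = 2 ∨ w = 5 ∨ w = 8) w4 hrk4
              rcases hcs4 with rfl | rfl | rfl
              · -- 4 matched to 2
                have hb := (TX3 2 hw2 hS3).1
                have h3 := hm3 (dg 1 1)
                rw [hb, hw6, hw4] at h3
                exact absurd h3 (by decide)
              · -- 4 matched to 5
                have hb := (TX3 2 hw2 hS3).1
                have h3 := hm3 (dg 1 1)
                rw [hb, hw6, hw4] at h3
                exact absurd h3 (by decide)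
              · -- 4 matched to 8
                have hb := (TX3 2 hw2 hS3).1
                have h3 := hm3 (dg 1 1)
                rw [hb, hw6, hw4] at h3
                exact absurd h3 (by decide)
            · -- 4 unmatched in H
              by_cases hS5 : r (hv 5) (m (hv 5)) ≤ ρ 5
              · obtain ⟨w5, hw5, hrk5⟩ := hmatch 5 hS5
                have hcs5 := (by decide : ∀ w : Fin 9, rk 5 w ≠ 0 → w = 0 ∨ w = 3) w5 hrk5
                rcases hcs5 with rfl | rfl
                · -- 5 matched to 0
                  by_cases hS0 : r (hv 0) (m (hv 0)) ≤ ρ 0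
                  · obtain ⟨w0, hw0, hrk0⟩ := hmatch 0 hS0
                    have hcs0 := (by decide : ∀ w : Fin 9, rk 0 w ≠ 0 → w = 1 ∨ w = 7) w0 hrk0
                    rcases hcs0 with rfl | rfl
                    · -- 0 matched to 1
                      rcases TZ4 6 hw6 hS4 with hg | hg <;>
                        exact absurd (minj (hg.trans hw0.symm)) (by decide)
                    · -- 0 matched to 7
                      by_cases hS7 : r (hv 7) (m (hv 7)) ≤ ρ 7
                      · obtain ⟨w7, hw7, hrk7⟩ := hmatch 7 hS7
                        have hcs7 := (by decide : ∀ w : Fin 9, rk 7 w ≠ 0 → w = 8) w7 hrk7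
                        rcases hcs7 with rfl
                        · -- 7 matched to 8
                          have h3 := hm3 (hv 5)
                          rw [hw5, hw0, hw7] at h3
                          exact absurd h3 (by decide)
                      · -- 7 unmatched in H
                        exact T0_7 0 hw0 hS7
                  · -- 0 unmatched in H
                    exact T0_0 5 hw5 hS0
                · -- 5 matched to 3
                  exact absurd (minj (hw2.trans hw5.symm)) (by decide)
              · -- 5 unmatched in H
                exact blockH 3 4 5 (by decide) (by decide) (by decide)
                  (prefO 3 4 (by decide) (by decide) hS3) (prefO 4 5 (by decide) (by decide) hS4) (prefO 5 3 (by decide) (by decide) hS5)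
        · -- 6 unmatched in H
          exact absurd (TX3 2 hw2 hS3).2 hS6
    · -- 2 unmatched in H
      by_cases hS1 : r (hv 1) (m (hv 1)) ≤ ρ 1
      · obtain ⟨w1, hw1, hrk1⟩ := hmatch 1 hS1
        have hcs1 := (by decide : ∀ w : Fin 9, rk 1 w ≠ 0 → w = 2 ∨ w = 5) w1 hrk1
        rcases hcs1 with rfl | rfl
        · -- 1 matched to 2
          exact T0_2 1 hw1 hS2
        · -- 1 matched to 5
          exact blockH 1 2 3 (by decide) (by decide) (by decide)
            (prefI 1 2 5 (by decide) hw1 (by decide) (by decide)) (prefO 2 3 (by decide) (by decide) hS2) (prefO 3 1 (by decide) (by decide) hS3)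
      · -- 1 unmatched in H
        exact blockH 1 2 3 (by decide) (by decide) (by decide)
          (prefO 1 2 (by decide) (by decide) hS1) (prefO 2 3 (by decide) (by decide) hS2) (prefO 3 1 (by decide) (by decide) hS3)
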